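/- arXiv:1904.00527 — 4 statements merged into one kernel-verified Lean document; each statement's English description precedes it below -/
import Mathlib

section
/- In a Coxeter group W, for any x, y ∈ W the set {uv : u ≤ x, v ≤ y} (where ≤ is Bruhat order) contains a unique maximal element, called the Demazure product x * y. -/
variable {B W : Type*} [Group W]

/-- `t` is a reflection of the Coxeter system `cs`, i.e. a conjugate of a simple reflection. -/
def IsCoxReflection {M : CoxeterMatrix B} (cs : CoxeterSystem M W) (t : W) : Prop :=
  ∃ (g : W) (i : B), t = g * cs.simple i * g⁻¹

/-- One step in the Bruhat order: multiply on the right by a reflection, increasing length. -/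
def BruhatStep {M : CoxeterMatrix B} (cs : CoxeterSystem M W) (u w : W) : Prop :=
  cs.length u < cs.length w ∧ ∃ t : W, IsCoxReflection cs t ∧ w = u * t

/-- The Bruhat order on a Coxeter group: reflexive-transitive closure of `BruhatStep`. -/
def BruhatLE {M : CoxeterMatrix B} (cs : CoxeterSystem M W) : W → W → Prop :=
  Relation.ReflTransGen (BruhatStep cs)

/-!
Strong exchange comes from the action of `W` on `W × ZMod 2` (as in Björner–Brenti) in which
`s i` conjugates the first coordinate by `s i` and flips the sign exactly at `s i`: the sign that
`(t, 0)` picks up under `w` is the parity of the number of occurrences of `t` in the right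
inversion sequence of any word for `w`, so that parity does not depend on the word. The braid
relations hold because the inversion sequence of the braid word is periodic.

Strong exchange gives the one-step lifting lemma: if `u → w` is a Bruhat step then `u = w * s i`
or `u * s i → w * s i` is again one. Induction along a Bruhat chain `u ≤ v` then shows that
`u * s i` lies below `v` or `v * s i`, and that `u` or `u * s i` lies below `v * s i`.

The greatest element of `{u * v | u ≤ x, v ≤ y}` is built by induction on `ℓ y`: if `y * s i < y`
and `m` is greatest for `(x, y * s i)`, then whichever of `m`, `m * s i` is longer is greatest for
`(x, y)`. Uniqueness is antisymmetry.
-/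

open List

namespace CoxeterSystem

variable {M : CoxeterMatrix B} (cs : CoxeterSystem M W)

local prefix:100 "s" => cs.simple
local prefix:100 "π" => cs.wordProd
local prefix:100 "ℓ" => cs.length
local prefix:100 "ris" => cs.rightInvSeq
local prefix:100 "lis" => cs.leftInvSeq

theorem prod_map_alternatingWord_two_mul {G : Type*} [Monoid G] (f : B → G) (i i' : B) (k : ℕ) :
    ((alternatingWord i i' (2 * k)).map f).prod = (f i * f i') ^ k := by
  induction k with
  | zero => simp [alternatingWord]
  | succ k ih =>
    rw [mul_add_one, alternatingWord_succ', alternatingWord_succ']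
    simp [ih, pow_succ', mul_assoc]

theorem reverse_alternatingWord_two_mul (i i' : B) (k : ℕ) :
    (alternatingWord i i' (2 * k)).reverse = alternatingWord i' i (2 * k) := by
  induction k with
  | zero => simp [alternatingWord]
  | succ k ih =>
    rw [mul_add_one, alternatingWord_succ', alternatingWord_succ']
    simp [ih, alternatingWord]

theorem getElem_leftInvSeq_alternatingWord_two_mul (i i' : B) (p k : ℕ) (h : k < 2 * p) :
    (lis (alternatingWord i' i (2 * p)))[k]'(by simp [h]) = s i' * (s i * s i') ^ k := by
  rw [getElem_leftInvSeq_alternatingWord _ _ _ _ _ h, prod_alternatingWord_eq_mul_pow,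
    if_neg (Nat.not_even_bit1 k), Nat.mul_add_div two_pos, Nat.div_eq_of_lt one_lt_two, add_zero]

theorem even_count_rightInvSeq_braid [DecidableEq W] (i i' : B) (t : W) :
    Even ((ris (alternatingWord i i' (2 * M i i'))).count t) := by
  rw [← reverse_alternatingWord_two_mul, rightInvSeq_reverse, count_reverse]
  generalize hL : lis (alternatingWord i' i (2 * M i i')) = L
  have hlen : L.length = 2 * M i i' := by simp [← hL]
  have hperiodic : L.drop (M i i') = L.take (M i i') := by
    refine ext_getElem (by simp [hlen]; omega) fun k h₁ h₂ => ?_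
    simp only [getElem_drop, getElem_take, ← hL]
    rw [getElem_leftInvSeq_alternatingWord_two_mul, getElem_leftInvSeq_alternatingWord_two_mul,
      pow_add, simple_mul_simple_pow, one_mul] <;> simp [hlen] at h₁ h₂ <;> omega
  rw [← take_append_drop (M i i') L, count_append, hperiodic]
  exact ⟨_, rfl⟩

section SignedReflections

variable [DecidableEq W]

noncomputable def signedSimplePerm (i : B) : Equiv.Perm (W × ZMod 2) :=
  Function.Involutive.toPerm (fun p => (s i * p.1 * s i, p.2 + if p.1 = s i then 1 else 0)) <| by
    rintro ⟨t, e⟩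
    have hconj : s i * (s i * t * s i) * s i = t := by
      simp only [← mul_assoc, simple_mul_simple_self, one_mul, simple_mul_simple_cancel_right]
    have hiff : s i * t * s i = s i ↔ t = s i := by
      rw [mul_assoc, mul_eq_left, mul_eq_one_iff_eq_inv, inv_simple]
    simp only [hconj, hiff, add_assoc, CharTwo.add_self_eq_zero, add_zero]

@[simp]
theorem signedSimplePerm_apply (i : B) (t : W) (e : ZMod 2) :
    cs.signedSimplePerm i (t, e) = (s i * t * s i, e + if t = s i then 1 else 0) :=
  rfl

theorem prod_map_signedSimplePerm_apply (ω : List B) (t : W) (e : ZMod 2) :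
    (ω.map cs.signedSimplePerm).prod (t, e) = (π ω * t * (π ω)⁻¹, e + (ris ω).count t) := by
  induction ω with
  | nil => simp
  | cons i ω ih =>
    have hiff : π ω * t * (π ω)⁻¹ = s i ↔ (π ω)⁻¹ * s i * π ω = t := by
      constructor <;> intro h <;> rw [← h] <;> group
    simp only [map_cons, prod_cons, Equiv.Perm.mul_apply, ih, signedSimplePerm_apply, rightInvSeq,
      count_cons, wordProd_cons, hiff, beq_iff_eq, mul_inv_rev, inv_simple, Nat.cast_add,
      Nat.cast_ite, Nat.cast_one, Nat.cast_zero, add_assoc]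
    simp only [mul_assoc]

theorem isLiftable_signedSimplePerm : M.IsLiftable cs.signedSimplePerm := by
  intro i i'
  ext1 ⟨t, e⟩
  have hπ : π (alternatingWord i i' (2 * M i i')) = 1 :=
    (prod_map_alternatingWord_two_mul cs.simple i i' _).trans (cs.simple_mul_simple_pow i i')
  rw [← prod_map_alternatingWord_two_mul, prod_map_signedSimplePerm_apply, hπ,
    (ZMod.natCast_eq_zero_iff_even).mpr (cs.even_count_rightInvSeq_braid i i' t)]
  simp

noncomputable def signedReflectionRep : W →* Equiv.Perm (W × ZMod 2) :=
  cs.lift ⟨cs.signedSimplePerm, cs.isLiftable_signedSimplePerm⟩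

theorem signedReflectionRep_wordProd (ω : List B) :
    cs.signedReflectionRep (π ω) = (ω.map cs.signedSimplePerm).prod := by
  rw [wordProd, map_list_prod, map_map]
  congr 2
  exact funext (cs.lift_apply_simple _)

noncomputable def reflectionParity (w t : W) : ZMod 2 :=
  (cs.signedReflectionRep w (t, 0)).2

theorem reflectionParity_wordProd (ω : List B) (t : W) :
    cs.reflectionParity (π ω) t = (ris ω).count t := by
  rw [reflectionParity, signedReflectionRep_wordProd, prod_map_signedSimplePerm_apply, zero_add]

theorem signedReflectionRep_apply (w t : W) (e : ZMod 2) :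
    cs.signedReflectionRep w (t, e) = (w * t * w⁻¹, e + cs.reflectionParity w t) := by
  obtain ⟨ω, rfl⟩ := cs.wordProd_surjective w
  rw [reflectionParity_wordProd, signedReflectionRep_wordProd, prod_map_signedSimplePerm_apply]

theorem reflectionParity_mul (w w' t : W) :
    cs.reflectionParity (w * w') t =
      cs.reflectionParity w' t + cs.reflectionParity w (w' * t * w'⁻¹) := by
  rw [reflectionParity, map_mul, Equiv.Perm.mul_apply, signedReflectionRep_apply,
    signedReflectionRep_apply, zero_add]

theorem reflectionParity_self {t : W} (ht : cs.IsReflection t) : cs.reflectionParity t t = 1 := by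
  obtain ⟨g, i, rfl⟩ := ht
  have hconj : g⁻¹ * (g * s i * g⁻¹) * g⁻¹⁻¹ = s i := by group
  have hsimple : cs.reflectionParity (s i) (s i) = 1 := by
    simpa using cs.reflectionParity_wordProd [i] (s i)
  have hinv := cs.reflectionParity_mul g g⁻¹ (g * s i * g⁻¹)
  rw [mul_inv_cancel, hconj, reflectionParity, map_one, Equiv.Perm.one_apply] at hinv
  dsimp only at hinv
  rw [reflectionParity_mul, hconj, reflectionParity_mul, simple_mul_simple_self, one_mul,
    inv_simple, hsimple]
  linear_combination -hinv

end SignedReflections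

variable {cs}

theorem IsRightInversion.reflectionParity_eq_one [DecidableEq W] {w t : W}
    (ht : cs.IsRightInversion w t) : cs.reflectionParity w t = 1 := by
  obtain ⟨α, hα, hαπ⟩ := cs.exists_isReduced (w * t)
  have hnotmem : t ∉ ris α := fun hmem => by
    have := (cs.isRightInversion_of_mem_rightInvSeq hα hmem).2
    rw [← hαπ, mul_assoc, ht.1.mul_self, mul_one] at this
    exact absurd ht.2 this.not_gt
  have hwt : cs.reflectionParity (w * t) t = 0 := by
    rw [hαπ, reflectionParity_wordProd, count_eq_zero.mpr hnotmem, Nat.cast_zero]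
  calc cs.reflectionParity w t = cs.reflectionParity (w * t * t) t := by
        rw [mul_assoc, ht.1.mul_self, mul_one]
    _ = 1 := by
        rw [reflectionParity_mul, cs.reflectionParity_self ht.1, ht.1.inv, ht.1.mul_self, one_mul,
          hwt, add_zero]

/-- The strong exchange condition. -/
theorem IsRightInversion.mem_rightInvSeq {w t : W} (ht : cs.IsRightInversion w t) {ω : List B}
    (hω : π ω = w) : t ∈ ris ω := by
  classical
  have h := ht.reflectionParity_eq_one
  rw [← hω, reflectionParity_wordProd] at h
  exact count_pos_iff.mp (Nat.pos_of_ne_zero fun h0 => by simp [h0] at h)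

theorem IsRightInversion.exists_mul_eq_wordProd_eraseIdx {w t : W} (ht : cs.IsRightInversion w t)
    {ω : List B} (hω : π ω = w) : ∃ j < ω.length, w * t = π (ω.eraseIdx j) := by
  obtain ⟨j, hj, hjt⟩ := getElem_of_mem (ht.mem_rightInvSeq hω)
  rw [length_rightInvSeq] at hj
  refine ⟨j, hj, ?_⟩
  rw [← hω, ← wordProd_mul_getD_rightInvSeq, getD_eq_getElem _ _ (by simpa using hj), hjt]

/-- Strong exchange on a reduced word for `w * s i` followed by `i`: deleting any letter but the
last would make `w * t * s i` shorter than `w * s i`. -/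
theorem IsRightInversion.mul_eq_mul_simple_of_length_lt {w t : W} {i : B}
    (ht : cs.IsRightInversion w t) (hlt : ℓ (w * s i) < ℓ (w * t * s i)) : w * t = w * s i := by
  obtain ⟨α, hα, hαπ⟩ := cs.exists_isReduced (w * s i)
  have hw : π (α ++ [i]) = w := by
    rw [wordProd_append, wordProd_singleton, ← hαπ, simple_mul_simple_cancel_right]
  obtain ⟨j, hj, hwt⟩ := ht.exists_mul_eq_wordProd_eraseIdx hw
  rw [length_append, length_singleton] at hj
  rcases (Nat.lt_succ_iff.mp hj).lt_or_eq with hjα | rfl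
  · rw [eraseIdx_append_of_lt_length hjα, wordProd_append, wordProd_singleton,
      ← mul_left_inj (s i), simple_mul_simple_cancel_right] at hwt
    have hle := cs.length_wordProd_le (α.eraseIdx j)
    have herase := length_eraseIdx_add_one hjα
    rw [← hwt] at hle
    have hαlen : ℓ (w * s i) = α.length := hαπ ▸ hα
    omega
  · rw [hwt, eraseIdx_append_of_length_le le_rfl, Nat.sub_self, eraseIdx_cons_zero, append_nil, hαπ]

end CoxeterSystem

section Bruhat

variable {M : CoxeterMatrix B} {cs : CoxeterSystem M W} {u w : W} {i : B}

local prefix:100 "s" => cs.simple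
local prefix:100 "ℓ" => cs.length

theorem isCoxReflection_iff {t : W} : IsCoxReflection cs t ↔ cs.IsReflection t :=
  Iff.rfl

theorem bruhatLE_mul_simple (h : ¬cs.IsRightDescent u i) : BruhatLE cs u (u * s i) :=
  .single ⟨by rw [cs.not_isRightDescent_iff] at h; omega, s i, cs.isReflection_simple i, rfl⟩

theorem mul_simple_bruhatLE (h : cs.IsRightDescent u i) : BruhatLE cs (u * s i) u := by
  simpa only [cs.simple_mul_simple_cancel_right] using
    bruhatLE_mul_simple (cs.isRightDescent_iff_not_isRightDescent_mul.mp h)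

theorem BruhatLE.length_le (h : BruhatLE cs u w) : ℓ u ≤ ℓ w := by
  induction h with
  | refl => rfl
  | tail _ hstep ih => exact ih.trans hstep.1.le

theorem BruhatLE.trans {v : W} (h₁ : BruhatLE cs u v) (h₂ : BruhatLE cs v w) : BruhatLE cs u w :=
  Relation.ReflTransGen.trans h₁ h₂

theorem BruhatLE.antisymm (h₁ : BruhatLE cs u w) (h₂ : BruhatLE cs w u) : u = w := by
  rcases h₁.cases_tail with rfl | ⟨b, hub, hbw⟩
  · rfl
  · exact absurd (h₂.trans hub).length_le hbw.1.not_ge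

theorem BruhatStep.eq_mul_simple_or_mul_simple (h : BruhatStep cs u w) (i : B) :
    u = w * s i ∨ BruhatStep cs (u * s i) (w * s i) := by
  obtain ⟨hlen, t, ht, rfl⟩ := h
  rw [isCoxReflection_iff] at ht
  have hconj : cs.IsReflection (s i * t * s i) := by
    simpa only [cs.inv_simple] using ht.conj (s i)
  have hmul : u * t * s i = u * s i * (s i * t * s i) := by
    simp only [mul_assoc, cs.simple_mul_simple_cancel_left]
  rcases (hconj.length_mul_left_ne (u * s i)).lt_or_gt with hlt | hgt
  · left
    have hinv : cs.IsRightInversion (u * t) t := ⟨ht, by rwa [mul_assoc, ht.mul_self, mul_one]⟩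
    have := hinv.mul_eq_mul_simple_of_length_lt <| by
      rwa [mul_assoc u t t, ht.mul_self, mul_one, hmul]
    rwa [mul_assoc, ht.mul_self, mul_one] at this
  · exact .inr ⟨by rwa [hmul], s i * t * s i, hconj, hmul⟩

theorem BruhatLE.mul_simple_le_or_le_mul_simple {v : W} (h : BruhatLE cs u v) (i : B) :
    BruhatLE cs (u * s i) v ∨ BruhatLE cs (u * s i) (v * s i) := by
  induction h with
  | refl => exact .inr .refl
  | tail _ hstep ih =>
    rcases hstep.eq_mul_simple_or_mul_simple i with rfl | hstep'
    · rwa [cs.simple_mul_simple_cancel_right, or_comm] at ih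
    · exact ih.imp (·.tail hstep) (·.tail hstep')

theorem BruhatLE.le_mul_simple_or_mul_simple_le_mul_simple {v : W} (h : BruhatLE cs u v) (i : B) :
    BruhatLE cs u (v * s i) ∨ BruhatLE cs (u * s i) (v * s i) := by
  induction h with
  | refl => exact .inr .refl
  | tail hub hstep ih =>
    rcases hstep.eq_mul_simple_or_mul_simple i with rfl | hstep'
    · exact .inl hub
    · exact ih.imp (·.tail hstep') (·.tail hstep')

theorem BruhatLE.mul_simple_le_of_isRightDescent (h : BruhatLE cs u w)
    (hw : cs.IsRightDescent w i) : BruhatLE cs (u * s i) w :=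
  (h.mul_simple_le_or_le_mul_simple i).elim id (·.trans (mul_simple_bruhatLE hw))

theorem BruhatLE.eq_one (h : BruhatLE cs u 1) : u = 1 :=
  cs.length_eq_zero_iff.mp <| Nat.le_zero.mp <| h.length_le.trans_eq cs.length_one

variable (cs) in
def demazureSet (x y : W) : Set W :=
  {z | ∃ u v, BruhatLE cs u x ∧ BruhatLE cs v y ∧ z = u * v}

variable {x y z : W}

theorem demazureSet_mono {y' : W} (h : BruhatLE cs y' y) :
    demazureSet cs x y' ⊆ demazureSet cs x y :=
  fun _ ⟨u, v, hu, hv, hz⟩ => ⟨u, v, hu, hv.trans h, hz⟩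

theorem mul_simple_mem_demazureSet (hy : cs.IsRightDescent y i)
    (hz : z ∈ demazureSet cs x (y * s i)) : z * s i ∈ demazureSet cs x y := by
  obtain ⟨u, v, hu, hv, rfl⟩ := hz
  exact ⟨u, v * s i, hu, (hv.trans (mul_simple_bruhatLE hy)).mul_simple_le_of_isRightDescent hy,
    mul_assoc u v _⟩

theorem mem_or_mul_simple_mem_demazureSet (hz : z ∈ demazureSet cs x y) (i : B) :
    z ∈ demazureSet cs x (y * s i) ∨ z * s i ∈ demazureSet cs x (y * s i) := by
  obtain ⟨u, v, hu, hv, rfl⟩ := hz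
  exact (hv.le_mul_simple_or_mul_simple_le_mul_simple i).imp (⟨u, v, hu, ·, rfl⟩)
    (⟨u, v * s i, hu, ·, mul_assoc u v _⟩)

theorem bruhatLE_of_mem_demazureSet {n : W} (hn : cs.IsRightDescent n i)
    (hbound : ∀ z ∈ demazureSet cs x (y * s i), BruhatLE cs z n) (hz : z ∈ demazureSet cs x y) :
    BruhatLE cs z n := by
  rcases mem_or_mul_simple_mem_demazureSet hz i with hz' | hz'
  · exact hbound z hz'
  · simpa only [cs.simple_mul_simple_cancel_right] using
      (hbound _ hz').mul_simple_le_of_isRightDescent hn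

theorem exists_greatest_demazureSet_of_isRightDescent {m : W} (hy : cs.IsRightDescent y i)
    (hm : m ∈ demazureSet cs x (y * s i))
    (hmax : ∀ z ∈ demazureSet cs x (y * s i), BruhatLE cs z m) :
    ∃ n ∈ demazureSet cs x y, ∀ z ∈ demazureSet cs x y, BruhatLE cs z n := by
  by_cases hmi : cs.IsRightDescent m i
  · exact ⟨m, demazureSet_mono (mul_simple_bruhatLE hy) hm,
      fun z => bruhatLE_of_mem_demazureSet hmi hmax⟩
  · refine ⟨m * s i, mul_simple_mem_demazureSet hy hm, fun z => bruhatLE_of_mem_demazureSet ?_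
      fun z hz => (hmax z hz).trans (bruhatLE_mul_simple hmi)⟩
    rwa [cs.isRightDescent_iff_not_isRightDescent_mul, cs.simple_mul_simple_cancel_right]

variable (cs) in
theorem exists_greatest_demazureSet (x y : W) :
    ∃ m ∈ demazureSet cs x y, ∀ z ∈ demazureSet cs x y, BruhatLE cs z m := by
  induction hn : ℓ y using Nat.strong_induction_on generalizing y with
  | _ n ih =>
    rcases eq_or_ne y 1 with rfl | hy
    · refine ⟨x, ⟨x, 1, .refl, .refl, (mul_one x).symm⟩, ?_⟩
      rintro z ⟨u, v, hu, hv, rfl⟩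
      rwa [hv.eq_one, mul_one]
    · obtain ⟨i, hi⟩ := cs.exists_rightDescent_of_ne_one hy
      obtain ⟨m, hm, hmax⟩ := ih _ (hn ▸ hi) (y * s i) rfl
      exact exists_greatest_demazureSet_of_isRightDescent hi hm hmax

end Bruhat

/-- The set `{u*v : u ≤ x, v ≤ y}` has a unique maximal element (the Demazure product `x * y`). -/
theorem demazure_product_existsUnique {M : CoxeterMatrix B} (cs : CoxeterSystem M W)
    (x y : W) :
    ∃! m : W, (∃ u v : W, BruhatLE cs u x ∧ BruhatLE cs v y ∧ m = u * v) ∧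
      ∀ z : W, (∃ u v : W, BruhatLE cs u x ∧ BruhatLE cs v y ∧ z = u * v) →
        BruhatLE cs z m := by
  obtain ⟨m, hm, hmax⟩ := exists_greatest_demazureSet cs x y
  exact ⟨m, ⟨hm, hmax⟩, fun m' ⟨hm', hmax'⟩ => (hmax m' hm').antisymm (hmax' m hm)⟩
end

section
/- Let ϑ : ℝ_{>0} × ℝ^N → ℝ^N be a smooth map giving an action of the multiplicative group (ℝ_{>0}, ·) on ℝ^N, and suppose ∂/∂t ‖ϑ(t,x)‖ > 0 for all t > 0 and all x ≠ 0 (Euclidean norm). Then: (i) ϑ(t, 0) = 0 for all t > 0; (ii) lim_{t→0⁺} ϑ(t, x) = 0 for every x ∈ ℝ^N. -/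
/-!
Part (i): `ϑ(t⁻¹, ϑ(t, 0)) = ϑ(1, 0) = 0`, so if `ϑ(t, 0) ≠ 0` the norm along its orbit would have
a minimum at `t⁻¹`, where its derivative cannot be positive.

Part (ii): for `x ≠ 0` the norm `‖ϑ(t, x)‖` is increasing in `t`, so it converges to some `L` as
`t → 0⁺`, and the orbit stays bounded and has a cluster point `y` with `‖y‖ = L`. Since
`ϑ(s, ϑ(t, x)) = ϑ(st, x)`, each `ϑ(s, y)` is a cluster point of `t ↦ ϑ(st, x)` as `t → 0⁺`,
so `‖ϑ(s, y)‖ = L` for all `s > 0`. A constant norm has zero derivative, hence `y = 0` and `L = 0`.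
-/

open Set Filter Topology

theorem MapClusterPt.eq_of_tendsto {X ι : Type*} [TopologicalSpace X] [T2Space X]
    {F : Filter ι} {u : ι → X} {a b : X} (h : MapClusterPt a F u) (h' : Tendsto u F (𝓝 b)) :
    a = b :=
  eq_of_nhds_neBot (h.neBot.mono (inf_le_inf_left _ h'))

section

variable {E : Type*} [NormedAddCommGroup E]

theorem ne_zero_of_deriv_norm_pos {f : ℝ → E} {t : ℝ}
    (h : 0 < deriv (fun s => ‖f s‖) t) : f t ≠ 0 := by
  intro h0
  have hmin : IsLocalMin (fun s => ‖f s‖) t := Eventually.of_forall fun s => by simp [h0]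
  exact h.ne' hmin.deriv_eq_zero

theorem not_eventuallyEq_const_of_deriv_norm_pos {f : ℝ → E} {t : ℝ} (c : ℝ)
    (h : 0 < deriv (fun s => ‖f s‖) t) : ¬ (fun s => ‖f s‖) =ᶠ[𝓝 t] fun _ => c := by
  intro hc
  rw [hc.deriv_eq, deriv_const] at h
  exact h.false

theorem exists_tendsto_norm_nhdsGT_zero {f : ℝ → E} (hf : ContinuousOn f (Ioi 0))
    (hderiv : ∀ t : ℝ, 0 < t → 0 < deriv (fun s => ‖f s‖) t) :
    ∃ L, Tendsto (fun t => ‖f t‖) (𝓝[>] 0) (𝓝 L) := by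
  have hmono : StrictMonoOn (fun t => ‖f t‖) (Ioi 0) :=
    strictMonoOn_of_deriv_pos (convex_Ioi 0) (continuous_norm.comp_continuousOn hf)
      fun t ht => hderiv t (by rwa [interior_Ioi] at ht)
  exact ⟨_, hmono.monotoneOn.tendsto_nhdsGT ⟨0, by rintro _ ⟨t, -, rfl⟩; exact norm_nonneg _⟩⟩

theorem exists_mapClusterPt_norm_eq [ProperSpace E] {ι : Type*} {l : Filter ι} [l.NeBot]
    {u : ι → E} {L : ℝ} (h : Tendsto (fun i => ‖u i‖) l (𝓝 L)) :
    ∃ y, ‖y‖ = L ∧ MapClusterPt y l u := by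
  have hbdd : ∀ᶠ i in l, u i ∈ Metric.closedBall 0 (L + 1) :=
    (h.eventually (gt_mem_nhds (lt_add_one L))).mono fun i hi => mem_closedBall_zero_iff.2 hi.le
  obtain ⟨y, -, hy⟩ := (isCompact_closedBall 0 (L + 1)).exists_mapClusterPt (le_principal_iff.2 hbdd)
  exact ⟨y, (hy.continuousAt_comp continuous_norm.continuousAt).eq_of_tendsto h, hy⟩

variable {ϑ : ℝ → E → E}

theorem apply_zero_eq_zero_of_deriv_norm_pos (hone : ∀ x, ϑ 1 x = x)
    (hmul : ∀ s t : ℝ, 0 < s → 0 < t → ∀ x, ϑ s (ϑ t x) = ϑ (s * t) x)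
    (hderiv : ∀ x : E, x ≠ 0 → ∀ t : ℝ, 0 < t → 0 < deriv (fun s => ‖ϑ s x‖) t)
    {t : ℝ} (ht : 0 < t) : ϑ t 0 = 0 := by
  by_contra hne
  refine ne_zero_of_deriv_norm_pos (hderiv _ hne t⁻¹ (inv_pos.2 ht)) ?_
  rw [hmul _ _ (inv_pos.2 ht) ht, inv_mul_cancel₀ ht.ne', hone]

theorem norm_apply_eq_of_mapClusterPt
    (hmul : ∀ s t : ℝ, 0 < s → 0 < t → ∀ x, ϑ s (ϑ t x) = ϑ (s * t) x)
    {x y : E} {s L : ℝ} (hs : 0 < s) (hcont : ContinuousAt (ϑ s) y)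
    (hL : Tendsto (fun t => ‖ϑ t x‖) (𝓝[>] 0) (𝓝 L))
    (hy : MapClusterPt y (𝓝[>] 0) fun t => ϑ t x) : ‖ϑ s y‖ = L := by
  have hsy : MapClusterPt (ϑ s y) (𝓝[>] 0) fun t => ϑ (s * t) x :=
    (hy.continuousAt_comp hcont).congrFun
      (eventually_mem_nhdsWithin.mono fun t ht => hmul s t hs ht x)
  have hLs : Tendsto (fun t => ‖ϑ (s * t) x‖) (𝓝[>] 0) (𝓝 L) :=
    hL.comp (tendsto_iff_comap.2 (comap_mulLeft_nhdsGT_zero hs).ge)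
  exact (hsy.continuousAt_comp continuous_norm.continuousAt).eq_of_tendsto hLs

theorem tendsto_apply_nhdsGT_zero [ProperSpace E] (hone : ∀ x, ϑ 1 x = x)
    (hmul : ∀ s t : ℝ, 0 < s → 0 < t → ∀ x, ϑ s (ϑ t x) = ϑ (s * t) x)
    (hderiv : ∀ x : E, x ≠ 0 → ∀ t : ℝ, 0 < t → 0 < deriv (fun s => ‖ϑ s x‖) t)
    (hcont_t : ∀ x, ContinuousOn (ϑ · x) (Ioi 0)) (hcont_x : ∀ t : ℝ, 0 < t → Continuous (ϑ t))
    (x : E) : Tendsto (ϑ · x) (𝓝[>] 0) (𝓝 0) := by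
  rcases eq_or_ne x 0 with rfl | hx
  · exact tendsto_const_nhds.congr' <| eventually_mem_nhdsWithin.mono fun t ht =>
      (apply_zero_eq_zero_of_deriv_norm_pos hone hmul hderiv ht).symm
  obtain ⟨L, hL⟩ := exists_tendsto_norm_nhdsGT_zero (hcont_t x) (hderiv x hx)
  obtain ⟨y, hyL, hy⟩ := exists_mapClusterPt_norm_eq hL
  have hy0 : y = 0 := by
    by_contra hy0
    refine not_eventuallyEq_const_of_deriv_norm_pos L (hderiv y hy0 1 one_pos) ?_
    filter_upwards [Ioi_mem_nhds one_pos] with s hs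
    exact norm_apply_eq_of_mapClusterPt hmul hs (hcont_x s hs).continuousAt hL hy
  have hL0 : L = 0 := by rw [← hyL, hy0, norm_zero]
  exact tendsto_zero_iff_norm_tendsto_zero.2 (hL0 ▸ hL)

end

/-- Properties of a smooth cone action: if `ϑ` is a smooth `(ℝ_{>0}, ·)`-action on `ℝ^N`
with `∂/∂t ‖ϑ(t,x)‖ > 0` for all `t > 0` and `x ≠ 0`, then `ϑ(t,0) = 0` for all `t > 0`,
and `ϑ(t,x) → 0` as `t → 0⁺` for every `x`. -/
theorem smooth_cone_action_fixes_zero_and_tendsto_zero (N : ℕ)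
    (ϑ : ℝ → EuclideanSpace ℝ (Fin N) → EuclideanSpace ℝ (Fin N))
    (hsmooth : ContDiffOn ℝ (⊤ : ℕ∞)
      (fun p : ℝ × EuclideanSpace ℝ (Fin N) => ϑ p.1 p.2) (Ioi (0 : ℝ) ×ˢ univ))
    (hone : ∀ x, ϑ 1 x = x)
    (hmul : ∀ s t : ℝ, 0 < s → 0 < t → ∀ x, ϑ s (ϑ t x) = ϑ (s * t) x)
    (hderiv : ∀ x : EuclideanSpace ℝ (Fin N), x ≠ 0 → ∀ t : ℝ, 0 < t →
      0 < deriv (fun s => ‖ϑ s x‖) t) :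
    (∀ t : ℝ, 0 < t → ϑ t 0 = 0) ∧
    (∀ x, Tendsto (fun t => ϑ t x) (nhdsWithin 0 (Ioi 0)) (nhds 0)) := by
  have hcont := hsmooth.continuousOn
  have hcont_t : ∀ x, ContinuousOn (ϑ · x) (Ioi 0) := fun x =>
    hcont.comp (continuous_id.prodMk continuous_const).continuousOn fun t ht => ⟨ht, mem_univ x⟩
  have hcont_x : ∀ t : ℝ, 0 < t → Continuous (ϑ t) := fun t ht =>
    hcont.comp_continuous (continuous_const.prodMk continuous_id) fun x => ⟨ht, mem_univ x⟩
  exact ⟨fun t => apply_zero_eq_zero_of_deriv_norm_pos hone hmul hderiv,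
    tendsto_apply_nhdsGT_zero hone hmul hderiv hcont_t hcont_x⟩
end

section
/- Let f(t', t'') = R(t',t'')/Q(t',t'') be a ratio of nonzero polynomials with positive real coefficients in variables t' = (t'₁,…,t'_m) and t'' = (t''₁,…,t''_p). Suppose the corresponding function ℝ_{>0}^m × ℝ_{>0}^p → ℝ_{>0} extends to a continuous function ℝ_{>0}^m × ℝ_{≥0}^p → ℝ_{≥0}. Then the limit lim_{t''→0} f(t', t''), as a function ℝ_{>0}^m → ℝ_{≥0}, is either identically zero or can be represented by a subtraction-free rational expression in t' (a ratio of nonzero polynomials with positive coefficients). -/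
open MvPolynomial Set

/-- A nonzero (multivariate) polynomial with strictly positive real coefficients. -/
def IsPosPoly {σ : Type*} (p : MvPolynomial σ ℝ) : Prop :=
  p ≠ 0 ∧ ∀ d ∈ p.support, 0 < p.coeff d

/-!
Restrict to the diagonal `t'' = (s, …, s)`. If `a` is the least total degree in `t''` of a
monomial of `R` and `R₀(t')` is the part of `R` of that degree, then
`R(t', s, …, s) = s ^ a * u(s)` with `u` continuous and `u 0 = R₀(t')`; likewise
`Q(t', s, …, s) = s ^ b * v(s)` with `v 0 = Q₀(t')`. Both `R₀` and `Q₀` have positive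
coefficients, so they are positive on the positive orthant. Hence
`F(t', 0) = lim_{s → 0⁺} s ^ (a - b) * R₀(t') / Q₀(t')`: the case `a < b` is impossible since the
limit is finite, `a = b` gives `R₀ / Q₀` and `a > b` gives `0`.
-/

open Finset Filter Topology

theorem IsPosPoly.eval_pos {σ : Type*} {P : MvPolynomial σ ℝ} (hP : IsPosPoly P) {x : σ → ℝ}
    (hx : ∀ i, 0 < x i) : 0 < eval x P := by
  rw [eval_eq]
  refine Finset.sum_pos (fun d hd => mul_pos (hP.2 d hd) ?_) (support_nonempty.mpr hP.1)
  exact Finset.prod_pos fun i _ => pow_pos (hx i) _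

namespace MvPolynomial

variable {σ τ K : Type*}

def inrDegree [Fintype τ] (d : (σ ⊕ τ) →₀ ℕ) : ℕ := ∑ j, d (Sum.inr j)

noncomputable def inrDegreePart [Fintype τ] [CommSemiring K] (P : MvPolynomial (σ ⊕ τ) K)
    (a : ℕ) : MvPolynomial σ K :=
  ∑ d ∈ P.support with inrDegree d = a,
    monomial (d.comapDomain Sum.inl Sum.inl_injective.injOn) (P.coeff d)

section Diagonal

variable [Fintype σ] [Fintype τ] [CommSemiring K]

/-- `s ^ (-a) * P(t', s, …, s)`, for `a` at most the `τ`-degree of every monomial of `P`. -/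
def diagQuotient (P : MvPolynomial (σ ⊕ τ) K) (a : ℕ) (t' : σ → K) (s : K) : K :=
  ∑ d ∈ P.support, P.coeff d * (∏ i, t' i ^ d (Sum.inl i)) * s ^ (inrDegree d - a)

theorem eval_sumElim_const_eq_pow_mul_diagQuotient (P : MvPolynomial (σ ⊕ τ) K) {a : ℕ}
    (ha : ∀ d ∈ P.support, a ≤ inrDegree d) (t' : σ → K) (s : K) :
    eval (Sum.elim t' fun _ => s) P = s ^ a * diagQuotient P a t' s := by
  rw [eval_eq', diagQuotient, Finset.mul_sum]
  refine Finset.sum_congr rfl fun d hd => ?_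
  simp only [Fintype.prod_sum_type, Sum.elim_inl, Sum.elim_inr, Finset.prod_pow_eq_pow_sum]
  have hsplit : ∑ j, d (Sum.inr j) = a + (inrDegree d - a) := by
    have := ha d hd
    unfold inrDegree at *
    omega
  rw [hsplit, pow_add]
  ring

theorem continuous_diagQuotient [TopologicalSpace K] [IsTopologicalSemiring K]
    (P : MvPolynomial (σ ⊕ τ) K) (a : ℕ) (t' : σ → K) : Continuous (diagQuotient P a t') := by
  unfold diagQuotient
  fun_prop

theorem diagQuotient_zero (P : MvPolynomial (σ ⊕ τ) K) {a : ℕ}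
    (ha : ∀ d ∈ P.support, a ≤ inrDegree d) (t' : σ → K) :
    diagQuotient P a t' 0 = eval t' (inrDegreePart P a) := by
  rw [diagQuotient, inrDegreePart, map_sum, Finset.sum_filter]
  refine Finset.sum_congr rfl fun d hd => ?_
  rw [eval_monomial, Finsupp.prod_fintype _ _ fun i => pow_zero _]
  split_ifs with h
  · rw [h, Nat.sub_self, pow_zero, mul_one]
    rfl
  · rw [zero_pow (by have := ha d hd; omega), mul_zero]

end Diagonal

theorem isPosPoly_inrDegreePart [Fintype τ] {P : MvPolynomial (σ ⊕ τ) ℝ} (hP : IsPosPoly P)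
    {d₀ : (σ ⊕ τ) →₀ ℕ} (hd₀ : d₀ ∈ P.support) : IsPosPoly (inrDegreePart P (inrDegree d₀)) := by
  classical
  have hcoeff : ∀ e d, d ∈ P.support → 0 ≤ coeff e (monomial
      (d.comapDomain Sum.inl Sum.inl_injective.injOn) (P.coeff d)) := fun e d hd => by
    rw [coeff_monomial]
    split_ifs
    exacts [(hP.2 d hd).le, le_rfl]
  have hpos : 0 < coeff (d₀.comapDomain Sum.inl Sum.inl_injective.injOn)
      (inrDegreePart P (inrDegree d₀)) := by
    rw [inrDegreePart, coeff_sum]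
    refine Finset.sum_pos' (fun d hd => hcoeff _ d (Finset.mem_filter.mp hd).1)
      ⟨d₀, Finset.mem_filter.mpr ⟨hd₀, rfl⟩, ?_⟩
    rw [coeff_monomial, if_pos rfl]
    exact hP.2 d₀ hd₀
  refine ⟨ne_zero_iff.mpr ⟨_, hpos.ne'⟩, fun e he => lt_of_le_of_ne ?_ (mem_support_iff.mp he).symm⟩
  rw [inrDegreePart, coeff_sum]
  exact Finset.sum_nonneg fun d hd => hcoeff e d (Finset.mem_filter.mp hd).1

end MvPolynomial

theorem IsPosPoly.exists_eval_sumElim_const_eq_pow_mul {σ τ : Type*} [Fintype σ] [Fintype τ]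
    {P : MvPolynomial (σ ⊕ τ) ℝ} (hP : IsPosPoly P) :
    ∃ (a : ℕ) (P₀ : MvPolynomial σ ℝ), IsPosPoly P₀ ∧ ∀ t' : σ → ℝ, ∃ u : ℝ → ℝ,
      Continuous u ∧ u 0 = eval t' P₀ ∧ ∀ s, eval (Sum.elim t' fun _ => s) P = s ^ a * u s := by
  obtain ⟨d₀, hd₀, hmin⟩ := Finset.exists_min_image P.support inrDegree (support_nonempty.mpr hP.1)
  exact ⟨inrDegree d₀, _, isPosPoly_inrDegreePart hP hd₀, fun t' => ⟨diagQuotient P _ t',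
    continuous_diagQuotient P _ t', diagQuotient_zero P hmin t',
    eval_sumElim_const_eq_pow_mul_diagQuotient P hmin t'⟩⟩

theorem zero_pow_mul_eq_of_tendsto {l : Filter ℝ} [l.NeBot] (hl : l ≤ 𝓝 0) {f g : ℝ → ℝ}
    {L G : ℝ} (hf : Tendsto f l (𝓝 L)) (hg : Tendsto g l (𝓝 G)) {i j : ℕ}
    (h : ∀ᶠ s in l, s ^ i * f s = s ^ j * g s) : 0 ^ i * L = 0 ^ j * G :=
  tendsto_nhds_unique ((((continuous_pow i).tendsto 0).mono_left hl).mul hf)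
    (((((continuous_pow j).tendsto 0).mono_left hl).mul hg).congr' (h.mono fun _ h => h.symm))

/-- With truncated subtraction, both sides equal `s ^ max a b * x / (s ^ b * y)`. -/
theorem pow_tsub_mul_pow_mul_div_pow_mul {s : ℝ} (hs : s ≠ 0) (a b : ℕ) (x y : ℝ) :
    s ^ (b - a) * (s ^ a * x / (s ^ b * y)) = s ^ (a - b) * (x / y) := by
  rcases le_total a b with hab | hab <;>
  · obtain ⟨c, rfl⟩ := Nat.exists_eq_add_of_le hab
    rw [Nat.sub_eq_zero_of_le hab, Nat.add_sub_cancel_left, pow_add]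
    field_simp

theorem tendsto_apply_const_of_continuousOn {ι κ : Type*}
    {F : (ι → ℝ) → (κ → ℝ) → ℝ}
    (hF : ContinuousOn (fun q : (ι → ℝ) × (κ → ℝ) => F q.1 q.2)
      ({t' | ∀ i, 0 < t' i} ×ˢ {t'' | ∀ i, 0 ≤ t'' i}))
    {t' : ι → ℝ} (ht' : ∀ i, 0 < t' i) :
    Tendsto (fun s : ℝ => F t' fun _ => s) (𝓝[>] 0) (𝓝 (F t' 0)) := by
  have hpath : Tendsto (fun s : ℝ => (t', fun _ : κ => s)) (𝓝[>] 0)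
      (𝓝[{t' | ∀ i, 0 < t' i} ×ˢ {t'' | ∀ i, 0 ≤ t'' i}] (t', 0)) := by
    refine tendsto_nhdsWithin_iff.mpr ⟨?_, ?_⟩
    · exact ((continuous_const.prodMk (continuous_pi fun _ => continuous_id)).tendsto' 0 _
        rfl).mono_left nhdsWithin_le_nhds
    · filter_upwards [self_mem_nhdsWithin] with s (hs : 0 < s)
      exact Set.mk_mem_prod ht' fun _ => hs.le
  exact (hF (t', 0) ⟨ht', fun _ => le_rfl⟩).tendsto.comp hpath

theorem sf_limit_is_sf_general (m p : ℕ)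
    (R Q : MvPolynomial (Fin m ⊕ Fin p) ℝ)
    (hR : IsPosPoly R) (hQ : IsPosPoly Q)
    (F : (Fin m → ℝ) → (Fin p → ℝ) → ℝ)
    (hFcont : ContinuousOn (fun q : (Fin m → ℝ) × (Fin p → ℝ) => F q.1 q.2)
      ({t' | ∀ i, 0 < t' i} ×ˢ {t'' | ∀ i, 0 ≤ t'' i}))
    (hFeq : ∀ t' t'', (∀ i, 0 < t' i) → (∀ i, 0 < t'' i) →
      F t' t'' = eval (Sum.elim t' t'') R / eval (Sum.elim t' t'') Q) :
    (∀ t', (∀ i, 0 < t' i) → F t' 0 = 0) ∨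
    ∃ R' Q' : MvPolynomial (Fin m) ℝ, IsPosPoly R' ∧ IsPosPoly Q' ∧
      ∀ t', (∀ i, 0 < t' i) → F t' 0 = eval t' R' / eval t' Q' := by
  obtain ⟨a, R₀, hR₀, hRdiag⟩ := hR.exists_eval_sumElim_const_eq_pow_mul
  obtain ⟨b, Q₀, hQ₀, hQdiag⟩ := hQ.exists_eval_sumElim_const_eq_pow_mul
  have hlimit : ∀ t', (∀ i, 0 < t' i) →
      0 ^ (b - a) * F t' 0 = 0 ^ (a - b) * (eval t' R₀ / eval t' Q₀) := by
    intro t' ht'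
    obtain ⟨u, hu, hu0, hRu⟩ := hRdiag t'
    obtain ⟨v, hv, hv0, hQv⟩ := hQdiag t'
    rw [← hu0, ← hv0]
    refine zero_pow_mul_eq_of_tendsto nhdsWithin_le_nhds
      (tendsto_apply_const_of_continuousOn hFcont ht')
      (((hu.tendsto 0).div (hv.tendsto 0) (hv0 ▸ (hQ₀.eval_pos ht').ne')).mono_left
        nhdsWithin_le_nhds) ?_
    filter_upwards [self_mem_nhdsWithin] with s (hs : 0 < s)
    rw [hFeq _ _ ht' fun _ => hs, hRu, hQv, pow_tsub_mul_pow_mul_div_pow_mul hs.ne', Pi.div_apply]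
  rcases lt_trichotomy a b with hab | rfl | hab
  · have h1 := hlimit 1 fun _ => one_pos
    rw [zero_pow (Nat.sub_ne_zero_of_lt hab), Nat.sub_eq_zero_of_le hab.le, zero_mul, pow_zero,
      one_mul] at h1
    exact absurd h1.symm
      (div_pos (hR₀.eval_pos fun _ => one_pos) (hQ₀.eval_pos fun _ => one_pos)).ne'
  · exact Or.inr ⟨R₀, Q₀, hR₀, hQ₀, fun t' ht' => by simpa using hlimit t' ht'⟩
  · refine Or.inl fun t' ht' => ?_
    simpa [Nat.sub_eq_zero_of_le hab.le, zero_pow (Nat.sub_ne_zero_of_lt hab)] using hlimit t' ht'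

/-- If a subtraction-free rational expression `R/Q` in variables `(t', t'')` extends
continuously to `ℝ_{>0}^m × ℝ_{≥0}^p` with nonnegative values, then its limit as
`t'' → 0` is either identically zero on the positive orthant, or representable by a
subtraction-free rational expression in `t'`. -/
theorem sf_limit_is_sf (m p : ℕ)
    (R Q : MvPolynomial (Fin m ⊕ Fin p) ℝ)
    (hR : IsPosPoly R) (hQ : IsPosPoly Q)
    (F : (Fin m → ℝ) → (Fin p → ℝ) → ℝ)
    (hFcont : ContinuousOn (fun q : (Fin m → ℝ) × (Fin p → ℝ) => F q.1 q.2)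
      ({t' | ∀ i, 0 < t' i} ×ˢ {t'' | ∀ i, 0 ≤ t'' i}))
    (hFnonneg : ∀ t' t'', (∀ i, 0 < t' i) → (∀ i, 0 ≤ t'' i) → 0 ≤ F t' t'')
    (hFeq : ∀ t' t'', (∀ i, 0 < t' i) → (∀ i, 0 < t'' i) →
      F t' t'' = eval (Sum.elim t' t'') R / eval (Sum.elim t' t'') Q) :
    (∀ t', (∀ i, 0 < t' i) → F t' 0 = 0) ∨
    ∃ R' Q' : MvPolynomial (Fin m) ℝ, IsPosPoly R' ∧ IsPosPoly Q' ∧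
      ∀ t', (∀ i, 0 < t' i) → F t' 0 = eval t' R' / eval t' Q' :=
  sf_limit_is_sf_general m p R Q hR hQ F hFcont hFeq
end

section
/- Let A be a compact topological space and Cone(A) = (A × ℝ_{≥0})/(A × {0}) the open cone over A with cone point c. Suppose X is a topological space with a distinguished point x₀, equipped with: (i) a continuous ℝ_{>0}-action ϑ on X fixing x₀, (ii) a continuous 'radius' function given by identifying, for each x ≠ x₀, a unique time t₁(x) with ϑ(t₁(x), x) ∈ S for a fixed compact subset S ⊂ X \ {x₀}, continuously in x, and (iii) the properties that ϑ(t, x) → x₀ uniformly over x ∈ S as t → 0⁺ and that for any sequence x_n → x₀ with x_n ≠ x₀ one has t₁(x_n) → ∞. Then the map sending x₀ ↦ c and x ↦ (ϑ(t₁(x), x), 1/t₁(x)) is a homeomorphism X → Cone(S). -/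
open Set Filter Topology

/-- The setoid on `A × ℝ≥0` collapsing `A × {0}` to a point. -/
def coneSetoid (A : Type*) : Setoid (A × NNReal) where
  r p q := p = q ∨ (p.2 = 0 ∧ q.2 = 0)
  iseqv := by
    refine ⟨fun p => Or.inl rfl, ?_, ?_⟩
    · rintro p q (rfl | ⟨h1, h2⟩)
      · exact Or.inl rfl
      · exact Or.inr ⟨h2, h1⟩
    · rintro p q r (rfl | ⟨h1, h2⟩) h
      · exact h
      · rcases h with rfl | ⟨h3, h4⟩
        · exact Or.inr ⟨h1, h2⟩
        · exact Or.inr ⟨h1, h4⟩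

/-- The open cone over `A`: the quotient `(A × ℝ≥0)/(A × {0})`. -/
def OpenCone (A : Type*) : Type _ := Quotient (coneSetoid A)

instance (A : Type*) [TopologicalSpace A] : TopologicalSpace (OpenCone A) :=
  instTopologicalSpaceQuotient

/-- The canonical projection to the open cone. -/
def coneMk {A : Type*} (p : A × NNReal) : OpenCone A := Quotient.mk (coneSetoid A) p

/-
The inverse map sends `(a, r)` to `ϑ(r, a)` and the apex to `x₀`; uniform contraction over the
compact `S` makes it continuous at the apex. The forward map is continuous away from `x₀` because
`t₁` is, and at `x₀` because `1 / t₁ → 0` there, together with the tube lemma for the compact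
`S`. The one subtle point is that `{x₀}` is closed: a point `x ≠ x₀` in its closure would put
`x₀` in every neighbourhood of `ϑ(t₁ x, x) ∈ S`, where `t₁ ≈ 1`, contradicting `t₁ → ∞` at `x₀`.
-/

section OpenCone

variable {A : Type*}

theorem coneMk_zero_eq_coneMk_zero (a b : A) :
    coneMk ((a, 0) : A × NNReal) = coneMk ((b, 0) : A × NNReal) :=
  Quotient.sound (Or.inr ⟨rfl, rfl⟩)

def OpenCone.lift {Y : Type*} (F : A × NNReal → Y) (hF : ∀ a b : A, F (a, 0) = F (b, 0)) :
    OpenCone A → Y :=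
  Quotient.lift F <| by
    rintro ⟨a, r⟩ ⟨b, s⟩ (h | ⟨hr, hs⟩)
    · rw [h]
    · dsimp only at hr hs
      rw [hr, hs, hF]

theorem OpenCone.ind {motive : OpenCone A → Prop} (h : ∀ p, motive (coneMk p)) (q : OpenCone A) :
    motive q :=
  Quotient.ind h q

variable [TopologicalSpace A]

theorem continuous_coneMk : Continuous (coneMk : A × NNReal → OpenCone A) :=
  continuous_quotient_mk'

theorem OpenCone.continuous_lift {Y : Type*} [TopologicalSpace Y] {F : A × NNReal → Y}
    (hF : ∀ a b : A, F (a, 0) = F (b, 0)) (hFc : Continuous F) :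
    Continuous (OpenCone.lift F hF) :=
  hFc.quotient_lift _

theorem tendsto_coneMk_apex [CompactSpace A] {ι : Type*} {l : Filter ι} {p : ι → A × NNReal}
    (hp : Tendsto (fun i => (p i).2) l (𝓝 0)) (a : A) :
    Tendsto (fun i => coneMk (p i)) l (𝓝 (coneMk ((a, 0) : A × NNReal))) := by
  intro V hV
  have hnear : ∀ b ∈ (univ : Set A),
      ∀ᶠ z : NNReal × A in 𝓝 (0, b), coneMk ((z.2, z.1) : A × NNReal) ∈ V := by
    intro b _
    rw [coneMk_zero_eq_coneMk_zero a b] at hV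
    exact (continuous_coneMk.comp continuous_swap).continuousAt.preimage_mem_nhds hV
  rw [mem_map]
  filter_upwards [hp.eventually (isCompact_univ.eventually_forall_of_forall_eventually
    (P := fun r b => coneMk ((b, r) : A × NNReal) ∈ V) hnear)]
    with i hi using hi (p i).1 (mem_univ _)

end OpenCone

section ContractingAction

variable {X : Type*} {x₀ : X} {S : Set X} {ϑ : ℝ → X → X} {t₁ : X → ℝ}

theorem action_inv_action (hone : ∀ x, ϑ 1 x = x)
    (hmul : ∀ s t : ℝ, 0 < s → 0 < t → ∀ x, ϑ s (ϑ t x) = ϑ (s * t) x)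
    {t : ℝ} (ht : 0 < t) (x : X) : ϑ t⁻¹ (ϑ t x) = x := by
  rw [hmul _ _ (inv_pos.2 ht) ht, inv_mul_cancel₀ ht.ne', hone]

theorem action_ne_of_ne (hone : ∀ x, ϑ 1 x = x)
    (hmul : ∀ s t : ℝ, 0 < s → 0 < t → ∀ x, ϑ s (ϑ t x) = ϑ (s * t) x)
    (hfix : ∀ t : ℝ, 0 < t → ϑ t x₀ = x₀) {t : ℝ} (ht : 0 < t) {x : X} (hx : x ≠ x₀) :
    ϑ t x ≠ x₀ := by
  intro h
  apply hx
  rw [← action_inv_action hone hmul ht x, h, hfix _ (inv_pos.2 ht)]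

theorem crossingTime_action (hx₀S : x₀ ∉ S) (hone : ∀ x, ϑ 1 x = x)
    (hmul : ∀ s t : ℝ, 0 < s → 0 < t → ∀ x, ϑ s (ϑ t x) = ϑ (s * t) x)
    (hfix : ∀ t : ℝ, 0 < t → ϑ t x₀ = x₀)
    (ht₁uniq : ∀ x, x ≠ x₀ → ∀ t : ℝ, 0 < t → ϑ t x ∈ S → t = t₁ x)
    {r : ℝ} (hr : 0 < r) {a : X} (ha : a ∈ S) : t₁ (ϑ r a) = r⁻¹ := by
  refine (ht₁uniq _ (action_ne_of_ne hone hmul hfix hr (ne_of_mem_of_not_mem ha hx₀S))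
    _ (inv_pos.2 hr) ?_).symm
  rwa [action_inv_action hone hmul hr]

/-- `a₀` only chooses a representative of the apex. -/
noncomputable def coneChart (a₀ : S) (ht₁S : ∀ x, x ≠ x₀ → ϑ (t₁ x) x ∈ S) (x : X) :
    S × NNReal :=
  open Classical in
  if h : x = x₀ then (a₀, 0) else (⟨ϑ (t₁ x) x, ht₁S x h⟩, Real.toNNReal (1 / t₁ x))

/-- The inverse of `coneChart` before passing to the quotient; `ϑ 0` is never evaluated. -/
noncomputable def coneParam (x₀ : X) (ϑ : ℝ → X → X) (p : S × NNReal) : X :=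
  if p.2 = 0 then x₀ else ϑ p.2 p.1

theorem coneChart_base (a₀ : S) (ht₁S : ∀ x, x ≠ x₀ → ϑ (t₁ x) x ∈ S) :
    coneChart a₀ ht₁S x₀ = (a₀, 0) :=
  dif_pos rfl

theorem coneChart_of_ne (a₀ : S) (ht₁S : ∀ x, x ≠ x₀ → ϑ (t₁ x) x ∈ S) {x : X} (hx : x ≠ x₀) :
    coneChart a₀ ht₁S x = (⟨ϑ (t₁ x) x, ht₁S x hx⟩, Real.toNNReal (1 / t₁ x)) :=
  dif_neg hx

@[simp]
theorem coneParam_zero (a : S) : coneParam x₀ ϑ (a, 0) = x₀ :=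
  if_pos rfl

theorem coneParam_coneChart (hone : ∀ x, ϑ 1 x = x)
    (hmul : ∀ s t : ℝ, 0 < s → 0 < t → ∀ x, ϑ s (ϑ t x) = ϑ (s * t) x)
    (ht₁pos : ∀ x, x ≠ x₀ → 0 < t₁ x) (a₀ : S) (ht₁S : ∀ x, x ≠ x₀ → ϑ (t₁ x) x ∈ S) (x : X) :
    coneParam x₀ ϑ (coneChart a₀ ht₁S x) = x := by
  by_cases hx : x = x₀
  · simp [hx, coneChart_base]
  · have ht := ht₁pos x hx
    have hr : 0 < (t₁ x)⁻¹ := inv_pos.2 ht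
    simp only [coneChart_of_ne _ _ hx, coneParam, one_div, Real.toNNReal_eq_zero, not_le.2 hr,
      if_false, Real.coe_toNNReal _ hr.le]
    exact action_inv_action hone hmul ht x

theorem coneMk_coneChart_coneParam (hx₀S : x₀ ∉ S) (hone : ∀ x, ϑ 1 x = x)
    (hmul : ∀ s t : ℝ, 0 < s → 0 < t → ∀ x, ϑ s (ϑ t x) = ϑ (s * t) x)
    (hfix : ∀ t : ℝ, 0 < t → ϑ t x₀ = x₀)
    (ht₁uniq : ∀ x, x ≠ x₀ → ∀ t : ℝ, 0 < t → ϑ t x ∈ S → t = t₁ x)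
    (a₀ : S) (ht₁S : ∀ x, x ≠ x₀ → ϑ (t₁ x) x ∈ S) (p : S × NNReal) :
    coneMk (coneChart a₀ ht₁S (coneParam x₀ ϑ p)) = coneMk p := by
  obtain ⟨a, r⟩ := p
  obtain rfl | hr := eq_or_ne r 0
  · rw [coneParam_zero, coneChart_base]
    exact coneMk_zero_eq_coneMk_zero a₀ a
  have hr' : (0 : ℝ) < r := NNReal.coe_pos.2 (pos_iff_ne_zero.2 hr)
  have hne : ϑ r a ≠ x₀ := action_ne_of_ne hone hmul hfix hr' (ne_of_mem_of_not_mem a.2 hx₀S)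
  have ht₁ : t₁ (ϑ r a) = (r : ℝ)⁻¹ := crossingTime_action hx₀S hone hmul hfix ht₁uniq hr' a.2
  rw [coneParam, if_neg hr]
  simp only [coneChart_of_ne _ _ hne, ht₁, one_div, inv_inv, Real.toNNReal_coe,
    action_inv_action hone hmul hr']

variable [TopologicalSpace X]

theorem continuousAt_action
    (hcont : ContinuousOn (fun p : ℝ × X => ϑ p.1 p.2) (Ioi (0 : ℝ) ×ˢ univ))
    {t : ℝ} (ht : 0 < t) (x : X) : ContinuousAt (fun p : ℝ × X => ϑ p.1 p.2) (t, x) :=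
  hcont.continuousAt ((isOpen_Ioi.prod isOpen_univ).mem_nhds ⟨ht, mem_univ x⟩)

theorem nhdsNE_base_neBot (hSne : S.Nonempty) (hx₀S : x₀ ∉ S) (hone : ∀ x, ϑ 1 x = x)
    (hmul : ∀ s t : ℝ, 0 < s → 0 < t → ∀ x, ϑ s (ϑ t x) = ϑ (s * t) x)
    (hfix : ∀ t : ℝ, 0 < t → ϑ t x₀ = x₀)
    (hunif : ∀ U ∈ 𝓝 x₀, ∃ δ > (0 : ℝ), ∀ t : ℝ, 0 < t → t < δ → ∀ x ∈ S, ϑ t x ∈ U) :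
    (𝓝[≠] x₀).NeBot := by
  obtain ⟨a, ha⟩ := hSne
  have hlim : Tendsto (ϑ · a) (𝓝[>] 0) (𝓝 x₀) := by
    intro U hU
    obtain ⟨δ, hδ, hδU⟩ := hunif U hU
    exact mem_map.2 <| mem_of_superset (Ioo_mem_nhdsGT hδ) fun t ht => hδU t ht.1 ht.2 a ha
  refine mem_closure_iff_nhdsWithin_neBot.1 (mem_closure_of_tendsto hlim ?_)
  filter_upwards [self_mem_nhdsWithin] with t ht
  exact action_ne_of_ne hone hmul hfix ht (ne_of_mem_of_not_mem ha hx₀S)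

theorem isClosed_singleton_base [(𝓝[≠] x₀).NeBot] (hx₀S : x₀ ∉ S)
    (hcont : ContinuousOn (fun p : ℝ × X => ϑ p.1 p.2) (Ioi (0 : ℝ) ×ˢ univ))
    (hone : ∀ x, ϑ 1 x = x) (hfix : ∀ t : ℝ, 0 < t → ϑ t x₀ = x₀)
    (ht₁pos : ∀ x, x ≠ x₀ → 0 < t₁ x) (ht₁S : ∀ x, x ≠ x₀ → ϑ (t₁ x) x ∈ S)
    (ht₁uniq : ∀ x, x ≠ x₀ → ∀ t : ℝ, 0 < t → ϑ t x ∈ S → t = t₁ x)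
    (ht₁cont : ContinuousOn t₁ {x | x ≠ x₀})
    (hdiv : Tendsto t₁ (𝓝[≠] x₀) atTop) : IsClosed ({x₀} : Set X) := by
  refine isClosed_of_closure_subset fun x hx => ?_
  by_contra hne
  have ht := ht₁pos x hne
  have hspec : x₀ ⤳ ϑ (t₁ x) x := by
    have := (specializes_iff_mem_closure.2 hx).map_of_continuousAt
      ((continuousAt_action hcont ht x).comp (f := fun y => (t₁ x, y)) (by fun_prop))
    simpa only [Function.comp_apply, hfix _ ht] using this
  have haS := ht₁S x hne
  have ha : ϑ (t₁ x) x ≠ x₀ := ne_of_mem_of_not_mem haS hx₀S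
  have hone_t₁ : t₁ (ϑ (t₁ x) x) = 1 := (ht₁uniq _ ha 1 one_pos (by rwa [hone])).symm
  have hlim : Tendsto t₁ (𝓝[≠] x₀) (𝓝 1) := by
    rw [← hone_t₁]
    exact (ht₁cont _ ha).mono_left (inf_le_inf_right _ hspec)
  exact not_tendsto_nhds_of_tendsto_atTop hdiv 1 hlim

theorem continuous_coneParam
    (hcont : ContinuousOn (fun p : ℝ × X => ϑ p.1 p.2) (Ioi (0 : ℝ) ×ˢ univ))
    (hunif : ∀ U ∈ 𝓝 x₀, ∃ δ > (0 : ℝ), ∀ t : ℝ, 0 < t → t < δ → ∀ x ∈ S, ϑ t x ∈ U) :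
    Continuous (coneParam (S := S) x₀ ϑ) := by
  refine continuous_iff_continuousAt.2 fun ⟨a, r⟩ => ?_
  obtain rfl | hr := eq_or_ne r 0
  · intro U hU
    obtain ⟨δ, hδ, hδU⟩ := hunif U (by simpa using hU)
    have hsmall : {p : S × NNReal | (p.2 : ℝ) < δ} ∈ 𝓝 (a, 0) :=
      (isOpen_Iio.preimage (show Continuous fun p : S × NNReal => (p.2 : ℝ) by fun_prop)).mem_nhds
        (by simpa using hδ)
    refine mem_map.2 (mem_of_superset hsmall fun p hp => ?_)
    by_cases hp0 : p.2 = 0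
    · simpa [coneParam, hp0] using mem_of_mem_nhds hU
    · simpa [coneParam, hp0] using hδU _ (NNReal.coe_pos.2 (pos_iff_ne_zero.2 hp0)) hp _ p.1.2
  · have hϑ : ContinuousAt (fun p : S × NNReal => ϑ p.2 p.1) (a, r) :=
      (continuousAt_action hcont (NNReal.coe_pos.2 (pos_iff_ne_zero.2 hr)) a).comp
        (x := (a, r)) (f := fun p : S × NNReal => ((p.2 : ℝ), (p.1 : X)))
        ((NNReal.continuous_coe.comp continuous_snd).prodMk
          (continuous_subtype_val.comp continuous_fst)).continuousAt
    refine hϑ.congr (mem_of_superset ((isOpen_ne.preimage continuous_snd).mem_nhds hr) ?_)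
    intro p hp
    simp [coneParam, show p.2 ≠ 0 from hp]

theorem continuousOn_coneChart
    (hcont : ContinuousOn (fun p : ℝ × X => ϑ p.1 p.2) (Ioi (0 : ℝ) ×ˢ univ))
    (ht₁pos : ∀ x, x ≠ x₀ → 0 < t₁ x) (ht₁cont : ContinuousOn t₁ {x | x ≠ x₀})
    (a₀ : S) (ht₁S : ∀ x, x ≠ x₀ → ϑ (t₁ x) x ∈ S) :
    ContinuousOn (coneChart a₀ ht₁S) {x | x ≠ x₀} := by
  rw [continuousOn_iff_continuous_domRestrict]
  have ht₁r : Continuous fun x : {x | x ≠ x₀} => t₁ x :=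
    continuousOn_iff_continuous_domRestrict.1 ht₁cont
  have hϑr : Continuous fun x : {x | x ≠ x₀} => ϑ (t₁ x) x :=
    hcont.comp_continuous (ht₁r.prodMk continuous_subtype_val) fun x => ⟨ht₁pos _ x.2, trivial⟩
  have hr : Continuous fun x : {x | x ≠ x₀} => Real.toNNReal (1 / t₁ x) :=
    continuous_real_toNNReal.comp (continuous_const.div ht₁r fun x => (ht₁pos _ x.2).ne')
  have hchart : {x | x ≠ x₀}.domRestrict (coneChart a₀ ht₁S) =
      fun x : {x | x ≠ x₀} => ((⟨ϑ (t₁ x) x, ht₁S _ x.2⟩ : S), Real.toNNReal (1 / t₁ x)) :=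
    funext fun x => coneChart_of_ne _ _ x.2
  rw [hchart]
  exact (hϑr.subtype_mk _).prodMk hr

theorem tendsto_coneChart_snd (hdiv : Tendsto t₁ (𝓝[≠] x₀) atTop)
    (a₀ : S) (ht₁S : ∀ x, x ≠ x₀ → ϑ (t₁ x) x ∈ S) :
    Tendsto (fun x => (coneChart a₀ ht₁S x).2) (𝓝 x₀) (𝓝 0) := by
  have hlim : Tendsto (fun x => Real.toNNReal (1 / t₁ x)) (𝓝[≠] x₀) (𝓝 0) := by
    rw [← Real.toNNReal_zero]
    exact (continuous_real_toNNReal.tendsto 0).comp (tendsto_const_nhds.div_atTop hdiv)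
  have hwithin : ContinuousWithinAt (fun x => (coneChart a₀ ht₁S x).2) {x₀}ᶜ x₀ := by
    rw [ContinuousWithinAt, coneChart_base]
    refine hlim.congr' ?_
    filter_upwards [self_mem_nhdsWithin] with x hx
    rw [coneChart_of_ne a₀ ht₁S hx]
  simpa only [coneChart_base] using (continuousWithinAt_compl_self.1 hwithin).tendsto

theorem continuous_coneMk_coneChart [CompactSpace S] (hx₀ : IsClosed {x₀})
    (hcont : ContinuousOn (fun p : ℝ × X => ϑ p.1 p.2) (Ioi (0 : ℝ) ×ˢ univ))
    (ht₁pos : ∀ x, x ≠ x₀ → 0 < t₁ x) (ht₁cont : ContinuousOn t₁ {x | x ≠ x₀})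
    (hdiv : Tendsto t₁ (𝓝[≠] x₀) atTop) (a₀ : S) (ht₁S : ∀ x, x ≠ x₀ → ϑ (t₁ x) x ∈ S) :
    Continuous fun x => coneMk (coneChart a₀ ht₁S x) := by
  refine continuous_iff_continuousAt.2 fun x => ?_
  obtain rfl | hx := eq_or_ne x x₀
  · have hapex := tendsto_coneMk_apex (tendsto_coneChart_snd hdiv a₀ ht₁S) a₀
    rwa [← coneChart_base a₀ ht₁S] at hapex
  · exact continuous_coneMk.continuousAt.comp
      ((continuousOn_coneChart hcont ht₁pos ht₁cont a₀ ht₁S).continuousAt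
        (hx₀.isOpen_compl.mem_nhds hx))

end ContractingAction

/-- Abstract cone lemma: a space with a continuous `ℝ_{>0}`-action contracting to a base
point `x₀`, with a continuous unique crossing-time function `t₁` for a compact section
`S`, is homeomorphic to the open cone over `S`, via `x ↦ (ϑ(t₁(x), x), 1/t₁(x))`. -/
theorem homeomorph_cone_of_contracting_action
    {X : Type*} [TopologicalSpace X] (x₀ : X) (S : Set X)
    (hScpt : IsCompact S) (hSne : S.Nonempty) (hx₀S : x₀ ∉ S)
    (ϑ : ℝ → X → X)
    (hcont : ContinuousOn (fun p : ℝ × X => ϑ p.1 p.2) (Ioi (0 : ℝ) ×ˢ univ))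
    (hone : ∀ x, ϑ 1 x = x)
    (hmul : ∀ s t : ℝ, 0 < s → 0 < t → ∀ x, ϑ s (ϑ t x) = ϑ (s * t) x)
    (hfix : ∀ t : ℝ, 0 < t → ϑ t x₀ = x₀)
    (t₁ : X → ℝ)
    (ht₁pos : ∀ x, x ≠ x₀ → 0 < t₁ x)
    (ht₁S : ∀ x, x ≠ x₀ → ϑ (t₁ x) x ∈ S)
    (ht₁uniq : ∀ x, x ≠ x₀ → ∀ t : ℝ, 0 < t → ϑ t x ∈ S → t = t₁ x)
    (ht₁cont : ContinuousOn t₁ {x | x ≠ x₀})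
    (hunif : ∀ U ∈ nhds x₀, ∃ δ > (0 : ℝ), ∀ t : ℝ, 0 < t → t < δ → ∀ x ∈ S, ϑ t x ∈ U)
    (hdiv : Tendsto t₁ (nhdsWithin x₀ {x | x ≠ x₀}) atTop) :
    ∃ e : X ≃ₜ OpenCone ↥S,
      (∀ a : ↥S, e x₀ = coneMk ((a, 0) : ↥S × NNReal)) ∧
      ∀ x, (hx : x ≠ x₀) →
        e x = coneMk ((⟨ϑ (t₁ x) x, ht₁S x hx⟩, Real.toNNReal (1 / t₁ x)) : ↥S × NNReal) := by
  obtain ⟨a₀, ha₀⟩ := hSne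
  have : CompactSpace S := isCompact_iff_compactSpace.1 hScpt
  have : (𝓝[≠] x₀).NeBot := nhdsNE_base_neBot ⟨a₀, ha₀⟩ hx₀S hone hmul hfix hunif
  have hx₀ : IsClosed {x₀} :=
    isClosed_singleton_base hx₀S hcont hone hfix ht₁pos ht₁S ht₁uniq ht₁cont hdiv
  let e : X ≃ₜ OpenCone S :=
    { toFun x := coneMk (coneChart ⟨a₀, ha₀⟩ ht₁S x)
      invFun := OpenCone.lift (coneParam x₀ ϑ) fun _ _ => by simp
      left_inv := coneParam_coneChart hone hmul ht₁pos _ ht₁S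
      right_inv := OpenCone.ind (coneMk_coneChart_coneParam hx₀S hone hmul hfix ht₁uniq _ ht₁S)
      continuous_toFun := continuous_coneMk_coneChart hx₀ hcont ht₁pos ht₁cont hdiv _ ht₁S
      continuous_invFun := OpenCone.continuous_lift _ (continuous_coneParam hcont hunif) }
  refine ⟨e, fun a => ?_, fun x hx => congrArg coneMk (coneChart_of_ne _ ht₁S hx)⟩
  exact (congrArg coneMk (coneChart_base _ ht₁S)).trans (coneMk_zero_eq_coneMk_zero _ a)
end
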